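/- If the TSP-QAP for A is linearizable with linearization C, then QAP(A, H_n, π) = (Σ_{i,j} c_{ij})/n for every permutation π; i.e., all permutations have the same QAP objective value. -/
import Mathlib


open Finset

def QAP {n : ℕ} (A B : Matrix (Fin n) (Fin n) ℝ) (π : Equiv.Perm (Fin n)) : ℝ :=
  ∑ i, ∑ j, A (π i) (π j) * B i j

def LAP {n : ℕ} (C : Matrix (Fin n) (Fin n) ℝ) (π : Equiv.Perm (Fin n)) : ℝ :=
  ∑ i, C i (π i)

def Fmat (n : ℕ) : Matrix (Fin n) (Fin n) ℝ := fun i j => if j < i then 1 else 0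

def Hmat (n : ℕ) : Matrix (Fin n) (Fin n) ℝ :=
  fun i j => if (j : ℕ) = ((i : ℕ) + 1) % n then 1 else 0

def DirCut {n : ℕ} (I : Finset (Fin n)) : Matrix (Fin n) (Fin n) ℝ :=
  fun i j => if i ∈ I ∧ j ∉ I then 1 else 0

def Balanced3Cycle {n : ℕ} (A : Matrix (Fin n) (Fin n) ℝ) : Prop :=
  ∀ i j k, A i j + A j k + A k i = A j i + A k j + A i k

def Linearizable {n : ℕ} (A B : Matrix (Fin n) (Fin n) ℝ) : Prop :=
  ∃ C : Matrix (Fin n) (Fin n) ℝ, ∀ π : Equiv.Perm (Fin n), QAP A B π = LAP C π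

lemma hmat_eq {n : ℕ} [NeZero n] (i j : Fin n) :
    Hmat n i j = if j = i + 1 then 1 else 0 := by
  unfold Hmat
  congr 1
  simp [Fin.ext_iff, Fin.val_add, Nat.add_mod]

lemma qap_hmat {n : ℕ} [NeZero n] (A : Matrix (Fin n) (Fin n) ℝ)
    (π : Equiv.Perm (Fin n)) :
    QAP A (Hmat n) π = ∑ i, A (π i) (π (i + 1)) := by
  unfold QAP
  refine Finset.sum_congr rfl fun i _ => ?_
  rw [Finset.sum_eq_single (i + 1)]
  · rw [hmat_eq]; simp
  · intro j _ hj; rw [hmat_eq]; simp [hj]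
  · simp

lemma qap_shift {n : ℕ} [NeZero n] (A : Matrix (Fin n) (Fin n) ℝ)
    (π : Equiv.Perm (Fin n)) (k : Fin n) :
    QAP A (Hmat n) (π * Equiv.addRight k) = QAP A (Hmat n) π := by
  rw [qap_hmat, qap_hmat]
  rw [← Equiv.sum_comp (Equiv.addRight k) (fun i => A (π i) (π (i + 1)))]
  refine Finset.sum_congr rfl fun i _ => ?_
  simp [Equiv.Perm.mul_apply, add_right_comm]

lemma lap_sum {n : ℕ} [NeZero n] (C : Matrix (Fin n) (Fin n) ℝ)
    (π : Equiv.Perm (Fin n)) :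
    ∑ k : Fin n, LAP C (π * Equiv.addRight k) = ∑ i, ∑ j, C i j := by
  unfold LAP
  rw [Finset.sum_comm]
  refine Finset.sum_congr rfl fun i _ => ?_
  rw [← Equiv.sum_comp ((Equiv.addLeft i).trans (π : Equiv (Fin n) (Fin n))) (fun j => C i j)]
  refine Finset.sum_congr rfl fun k _ => ?_
  simp [Equiv.Perm.mul_apply, add_comm]

theorem stmt19 {n : ℕ} (A C : Matrix (Fin n) (Fin n) ℝ)
    (h : ∀ π : Equiv.Perm (Fin n), QAP A (Hmat n) π = LAP C π)
    (π : Equiv.Perm (Fin n)) :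
    QAP A (Hmat n) π = (∑ i, ∑ j, C i j) / n := by
  rcases Nat.eq_zero_or_pos n with h0 | h0
  · subst h0; simp [QAP]
  · haveI : NeZero n := ⟨h0.ne'⟩
    have key : (n : ℝ) * QAP A (Hmat n) π = ∑ i, ∑ j, C i j := by
      calc (n : ℝ) * QAP A (Hmat n) π
          = ∑ _k : Fin n, QAP A (Hmat n) π := by
            rw [Finset.sum_const, Finset.card_univ, Fintype.card_fin, nsmul_eq_mul]
        _ = ∑ k : Fin n, QAP A (Hmat n) (π * Equiv.addRight k) := by
            exact Finset.sum_congr rfl fun k _ => (qap_shift A π k).symm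
        _ = ∑ k : Fin n, LAP C (π * Equiv.addRight k) :=
            Finset.sum_congr rfl fun k _ => h _
        _ = _ := lap_sum C π
    have hn : (n : ℝ) ≠ 0 := Nat.cast_ne_zero.mpr h0.ne'
    field_simp
    linarith [key]
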